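/- If x is an increasing sequence (r_n) is chosen with r_{-1} = 0 and r_n the least number r > r_{n-1} such that r ∈ F_n \ ⋃_{i<n} F_i, where F ⊆ ℕ describes an almost disjoint family of infinite columns, then such r_n exists for every n, the set R = {r_0, r_1, …} is infinite, and R ∩ F_n ⊆ {r_0, …, r_n} is finite for every n; moreover if F is computable then R is computable. -/

import Mathlib

/-!
Since `F_n` is infinite and meets `⋃_{i<n} F_i` in a finite set, a next term `r_n` above
`r_{n-1}` always exists. A term `r_m` avoids all columns `F_i` with `i < m`, so it can lie in
`F_n` only if `m ≤ n`. When `F` is computable, `r_n` is found by unbounded search over a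
decidable condition, and since `n ≤ r_n`, membership `x ∈ R` only requires checking
`r_0, …, r_x`.
-/

def column (F : Set ℕ) (n : ℕ) : Set ℕ := {x | Nat.pair x n ∈ F}

open Computable

section

variable {α : Type*} [Primcodable α]

theorem ComputablePred.comp {β : Type*} [Primcodable β] {p : β → Prop} {f : α → β}
    (hp : ComputablePred p) (hf : Computable f) : ComputablePred fun a => p (f a) :=
  ComputablePred.computable_of_manyOneReducible ⟨f, hf, fun _ => Iff.rfl⟩ hp

protected theorem ComputablePred.and {p q : α → Prop} (hp : ComputablePred p)
    (hq : ComputablePred q) : ComputablePred fun a => p a ∧ q a := by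
  classical
  exact ((Primrec.and.to_comp.comp hp.decide hq.decide).of_eq fun a => by simp).computablePred

theorem ComputablePred.forall_lt {p : α × ℕ → Prop} (hp : ComputablePred p) :
    ComputablePred fun x : α × ℕ => ∀ i < x.2, p (x.1, i) := by
  classical
  have hstep : Computable₂ fun (x : α × ℕ) (y : ℕ × Bool) => y.2 && decide (p (x.1, y.1)) :=
    Primrec.and.to_comp.comp (snd.comp snd) (hp.decide.comp (fst.comp fst |>.pair (fst.comp snd)))
  refine ((nat_rec snd (const true) hstep).of_eq fun x => ?_).computablePred
  obtain ⟨a, n⟩ := x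
  induction n with
  | zero => simp
  | succ n ih =>
    dsimp only at ih ⊢
    simp only [ih, Nat.forall_lt_succ_right, Bool.decide_and]

theorem Computable.computablePred_mem_range_of_strictMono {r : ℕ → ℕ} (hr : Computable r)
    (hmono : StrictMono r) : ComputablePred (· ∈ Set.range r) := by
  have hne : ComputablePred fun x : ℕ × ℕ => r x.2 ≠ x.1 :=
    (Primrec.eq.computablePred.comp ((hr.comp snd).pair fst)).not
  refine (hne.forall_lt.comp (Computable.id.pair Computable.succ)).not.of_eq fun x => ?_
  simp only [not_forall, not_not, exists_prop, Set.mem_range]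
  exact ⟨fun ⟨i, _, hi⟩ => ⟨i, hi⟩, fun ⟨i, hi⟩ => ⟨i, Nat.lt_succ_of_le (hi ▸ hmono.le_apply), hi⟩⟩

end

def DiagonalCandidate (A : ℕ → Set ℕ) (n prev m : ℕ) : Prop :=
  prev < m ∧ m ∈ A n ∧ ∀ i < n, m ∉ A i

theorem exists_diagonalCandidate {A : ℕ → Set ℕ} (hinf : ∀ n, (A n).Infinite)
    (had : Pairwise fun n k => (A n ∩ A k).Finite) (n prev : ℕ) :
    ∃ m, DiagonalCandidate A n prev m := by
  have hfin : (⋃ i ∈ Set.Iio n, A n ∩ A i).Finite :=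
    (Set.finite_Iio n).biUnion fun i hi => had (ne_of_gt hi)
  obtain ⟨m, ⟨hmn, hmi⟩, hlt⟩ := ((hinf n).sdiff hfin).exists_gt prev
  exact ⟨m, hlt, hmn, fun i hi hmi' => hmi (Set.mem_biUnion hi ⟨hmn, hmi'⟩)⟩

theorem computablePred_diagonalCandidate {A : ℕ → Set ℕ}
    (hA : ComputablePred fun x : ℕ × ℕ => x.1 ∈ A x.2) :
    ComputablePred fun x : (ℕ × ℕ) × ℕ => DiagonalCandidate A x.1.1 x.1.2 x.2 := by
  have hlt : ComputablePred fun x : (ℕ × ℕ) × ℕ => x.1.2 < x.2 :=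
    Primrec.nat_lt.computablePred.comp ((snd.comp fst).pair snd)
  have hmem : ComputablePred fun x : (ℕ × ℕ) × ℕ => x.2 ∈ A x.1.1 :=
    hA.comp (snd.pair (fst.comp fst))
  have havoid : ComputablePred fun x : (ℕ × ℕ) × ℕ => ∀ i < x.1.1, x.2 ∉ A i :=
    hA.not.forall_lt.comp (snd.pair (fst.comp fst))
  exact hlt.and (hmem.and havoid)

theorem computablePred_mem_column {F : Set ℕ} (hF : ComputablePred (· ∈ F)) :
    ComputablePred fun x : ℕ × ℕ => x.1 ∈ column F x.2 :=
  hF.comp Primrec₂.natPair.to_comp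

section DiagonalSeq

variable {A : ℕ → Set ℕ} (hA : ∀ n prev, ∃ m, DiagonalCandidate A n prev m)

open Classical in
noncomputable def diagonalSeq : ℕ → ℕ
  | 0 => Nat.find (hA 0 0)
  | n + 1 => Nat.find (hA (n + 1) (diagonalSeq n))

theorem isLeast_diagonalSeq (n : ℕ) :
    IsLeast {m | DiagonalCandidate A n (if n = 0 then 0 else diagonalSeq hA (n - 1)) m}
      (diagonalSeq hA n) := by
  classical
  cases n <;> exact Nat.isLeast_find _

theorem diagonalSeq_strictMono : StrictMono (diagonalSeq hA) :=
  strictMono_nat_of_lt_succ fun n => (isLeast_diagonalSeq hA (n + 1)).1.1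

theorem range_diagonalSeq_inter_subset (n : ℕ) :
    Set.range (diagonalSeq hA) ∩ A n ⊆ diagonalSeq hA '' Set.Iic n := by
  rintro _ ⟨⟨m, rfl⟩, hm⟩
  refine ⟨m, Set.mem_Iic.2 (not_lt.1 fun hnm => ?_), rfl⟩
  exact (isLeast_diagonalSeq hA m).1.2.2 n hnm hm

theorem computable_diagonalSeq
    (hC : ComputablePred fun x : (ℕ × ℕ) × ℕ => DiagonalCandidate A x.1.1 x.1.2 x.2) :
    Computable (diagonalSeq hA) := by
  classical
  have hstep : Computable fun x : ℕ × ℕ => Nat.find (hA x.1 x.2) :=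
    Computable.find hC fun x : ℕ × ℕ => hA x.1 x.2
  refine (nat_rec Computable.id (const (diagonalSeq hA 0))
    (hstep.comp ((succ.comp (fst.comp snd)).pair (snd.comp snd))).to₂).of_eq fun n => ?_
  induction n with
  | zero => rfl
  | succ n ih =>
    simp only [id] at ih ⊢
    simp only [diagonalSeq.eq_2, ← ih]

end DiagonalSeq

/-- Diagonalization against an almost disjoint family: there is a sequence `r` where
`r n` is the least number greater than the previous value lying in
`F_n \ ⋃_{i<n} F_i`; its range `R` is infinite, meets each `F_n` only within
`{r 0, …, r n}`, hence finitely, and `R` is computable whenever `F` is. -/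
theorem AD_diagonalization (F : Set ℕ)
    (hinf : ∀ n, (column F n).Infinite)
    (had : ∀ n k, n ≠ k → (column F n ∩ column F k).Finite) :
    ∃ r : ℕ → ℕ,
      (∀ n, ((if n = 0 then 0 else r (n - 1)) < r n ∧
              r n ∈ column F n ∧ (∀ i < n, r n ∉ column F i)) ∧
        ∀ m, ((if n = 0 then 0 else r (n - 1)) < m ∧
              m ∈ column F n ∧ (∀ i < n, m ∉ column F i)) → r n ≤ m) ∧
      (Set.range r).Infinite ∧
      (∀ n, Set.range r ∩ column F n ⊆ r '' Set.Iic n) ∧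
      (∀ n, (Set.range r ∩ column F n).Finite) ∧
      (ComputablePred (· ∈ F) → ComputablePred (· ∈ Set.range r)) := by
  have hA := exists_diagonalCandidate hinf fun n k => had n k
  have hsub := range_diagonalSeq_inter_subset hA
  refine ⟨diagonalSeq hA, isLeast_diagonalSeq hA,
    Set.infinite_range_of_injective (diagonalSeq_strictMono hA).injective, hsub,
    fun n => ((Set.finite_Iic n).image _).subset (hsub n), fun hF => ?_⟩
  have hC := computablePred_diagonalCandidate (computablePred_mem_column hF)
  exact (computable_diagonalSeq hA hC).computablePred_mem_range_of_strictMono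
    (diagonalSeq_strictMono hA)
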